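/- arXiv:1308.6481 — 4 statements merged into one kernel-verified Lean document; each statement's English description precedes it below -/
import Mathlib

section
/- Let X_1, X_2, ... be i.i.d. random variables with distribution P_0 on a finite alphabet. Let L_n be the codelength function of a prefix-free code (satisfying Kraft's inequality: sum over all strings x_1^n of 2^{-L_n(x_1^n)} ≤ 1 for each n). Fix λ > 0 and α ∈ (0,1). Define the stopping time N^1 = inf{n : -L_n(X_1^n) - log P_0(X_1^n) - nλ/2 ≥ -log α} (logs base 2). Then P_0(N^1 < ∞) ≤ α / (2^{λ/2} - 1), and in particular P_0(N^1 < ∞) ≤ α whenever 2^{λ/2} - 1 ≥ 1. -/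
/-
For each `n`, the event `W n ≥ -log₂ α` says that the string `x = X₁ⁿ` has
`P₀(x) ≤ α · 2^{-Lₙ(x)} · 2^{-nλ/2}`. Summing over such strings and using Kraft's inequality,
it has probability at most `α · 2^{-nλ/2}`; a union bound over `n ≥ 1` and the geometric series
`∑_{n ≥ 1} 2^{-nλ/2} = 1 / (2^{λ/2} - 1)` give the claim.
-/

open MeasureTheory ProbabilityTheory Filter Real

lemma le_mul_two_rpow_neg_of_logb_le {P α s : ℝ} (hP : 0 ≤ P) (hα : 0 < α)
    (h : logb 2 P ≤ logb 2 α - s) : P ≤ α * 2 ^ (-s) := by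
  rcases hP.eq_or_lt with rfl | hP
  · positivity
  calc P ≤ 2 ^ (logb 2 α - s) := (logb_le_iff_le_rpow one_lt_two hP).mp h
    _ = α * 2 ^ (-s) := by
      rw [sub_eq_add_neg, rpow_add two_pos, rpow_logb two_pos (by norm_num) hα]

lemma sum_filter_logb_le_le_of_kraft {ι : Type*} [Fintype ι] {q ℓ : ι → ℝ}
    (hq : ∀ x, 0 ≤ q x) (hKraft : ∑ x, (2 : ℝ) ^ (-ℓ x) ≤ 1) {α : ℝ} (hα : 0 < α) (t : ℝ) :
    ∑ x ∈ Finset.univ.filter (fun x => logb 2 (q x) ≤ logb 2 α - ℓ x - t), q x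
      ≤ α * 2 ^ (-t) := by
  set S := Finset.univ.filter (fun x => logb 2 (q x) ≤ logb 2 α - ℓ x - t)
  have hterm : ∀ x ∈ S, q x ≤ α * 2 ^ (-t) * 2 ^ (-ℓ x) := by
    intro x hx
    have h := le_mul_two_rpow_neg_of_logb_le (hq x) hα
      (by rw [Finset.mem_filter] at hx; linarith [hx.2] : logb 2 (q x) ≤ logb 2 α - (ℓ x + t))
    rw [neg_add, rpow_add two_pos] at h
    linarith
  calc ∑ x ∈ S, q x ≤ ∑ x ∈ S, α * 2 ^ (-t) * 2 ^ (-ℓ x) := Finset.sum_le_sum hterm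
    _ = α * 2 ^ (-t) * ∑ x ∈ S, (2 : ℝ) ^ (-ℓ x) := (Finset.mul_sum _ _ _).symm
    _ ≤ α * 2 ^ (-t) * ∑ x, (2 : ℝ) ^ (-ℓ x) := by
      refine mul_le_mul_of_nonneg_left ?_ (by positivity)
      exact Finset.sum_le_sum_of_subset_of_nonneg (Finset.subset_univ S)
        (fun x _ _ => by positivity)
    _ ≤ α * 2 ^ (-t) := mul_le_of_le_one_right (by positivity) hKraft

lemma measure_preimage_finset_le_ofReal_sum {Ω ι : Type*} [MeasurableSpace Ω] {μ : Measure Ω}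
    {Y : Ω → ι} {q : ι → ℝ} (hq : ∀ x, 0 ≤ q x) (hY : ∀ x, μ (Y ⁻¹' {x}) = ENNReal.ofReal (q x))
    (S : Finset ι) : μ (Y ⁻¹' S) ≤ ENNReal.ofReal (∑ x ∈ S, q x) := by
  calc μ (Y ⁻¹' S) = μ (⋃ x ∈ S, Y ⁻¹' {x}) := by simp
    _ ≤ ∑ x ∈ S, μ (Y ⁻¹' {x}) := measure_biUnion_finset_le _ _
    _ = ENNReal.ofReal (∑ x ∈ S, q x) := by
      rw [ENNReal.ofReal_sum_of_nonneg (fun x _ => hq x)]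
      exact Finset.sum_congr rfl (fun x _ => hY x)

lemma measure_codelength_gain_ge_le {Ω ι : Type*} [MeasurableSpace Ω] [Fintype ι]
    {μ : Measure Ω} {Y : Ω → ι} {q ℓ : ι → ℝ} (hq : ∀ x, 0 ≤ q x)
    (hY : ∀ x, μ (Y ⁻¹' {x}) = ENNReal.ofReal (q x)) (hKraft : ∑ x, (2 : ℝ) ^ (-ℓ x) ≤ 1)
    {α : ℝ} (hα : 0 < α) (t : ℝ) :
    μ {ω | -logb 2 α ≤ -ℓ (Y ω) - logb 2 (q (Y ω)) - t} ≤ ENNReal.ofReal (α * 2 ^ (-t)) := by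
  set S := Finset.univ.filter (fun x => logb 2 (q x) ≤ logb 2 α - ℓ x - t)
  have hsub : {ω | -logb 2 α ≤ -ℓ (Y ω) - logb 2 (q (Y ω)) - t} ⊆ Y ⁻¹' S := by
    intro ω hω
    simp only [Set.mem_ofPred_eq] at hω
    simp only [S, Finset.coe_filter, Set.mem_preimage, Set.mem_ofPred_eq, Finset.mem_univ,
      true_and]
    linarith
  calc _ ≤ μ (Y ⁻¹' S) := measure_mono hsub
    _ ≤ ENNReal.ofReal (∑ x ∈ S, q x) := measure_preimage_finset_le_ofReal_sum hq hY S
    _ ≤ ENNReal.ofReal (α * 2 ^ (-t)) :=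
      ENNReal.ofReal_le_ofReal (sum_filter_logb_le_le_of_kraft hq hKraft hα t)

lemma measure_exists_pos_le_of_le_geometric {Ω : Type*} [MeasurableSpace Ω] {μ : Measure Ω}
    {E : ℕ → Set Ω} {a r : ℝ} (ha : 0 ≤ a) (hr0 : 0 ≤ r) (hr1 : r < 1)
    (hE : ∀ n, 1 ≤ n → μ (E n) ≤ ENNReal.ofReal (a * r ^ n)) :
    μ {ω | ∃ n, 1 ≤ n ∧ ω ∈ E n} ≤ ENNReal.ofReal (a * r / (1 - r)) := by
  have hsum : HasSum (fun n : ℕ => a * r ^ (n + 1)) (a * r / (1 - r)) := by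
    have := (hasSum_geometric_of_lt_one hr0 hr1).mul_left (a * r)
    simpa only [pow_succ, mul_comm _ r, ← mul_assoc, div_eq_mul_inv] using this
  have hcover : {ω | ∃ n, 1 ≤ n ∧ ω ∈ E n} ⊆ ⋃ n : ℕ, E (n + 1) := by
    rintro ω ⟨n, hn, hω⟩
    exact Set.mem_iUnion.mpr ⟨n - 1, by rwa [Nat.sub_add_cancel hn]⟩
  calc _ ≤ μ (⋃ n : ℕ, E (n + 1)) := measure_mono hcover
    _ ≤ ∑' n : ℕ, μ (E (n + 1)) := measure_iUnion_le _
    _ ≤ ∑' n : ℕ, ENNReal.ofReal (a * r ^ (n + 1)) :=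
      ENNReal.tsum_le_tsum (fun n => hE (n + 1) n.succ_pos)
    _ = ENNReal.ofReal (a * r / (1 - r)) := by
      rw [← ENNReal.ofReal_tsum_of_nonneg (fun n => by positivity) hsum.summable, hsum.tsum_eq]

lemma two_rpow_neg_natCast_mul (n : ℕ) (c : ℝ) : (2 : ℝ) ^ (-(n * c)) = ((2 : ℝ) ^ c)⁻¹ ^ n := by
  rw [rpow_neg zero_le_two, mul_comm, rpow_mul_natCast zero_le_two, inv_pow]

lemma inv_div_one_sub_inv {b : ℝ} (hb : 1 < b) : b⁻¹ / (1 - b⁻¹) = 1 / (b - 1) := by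
  have : b - 1 ≠ 0 := by linarith
  field_simp

theorem stmt0_universal_test_false_alarm_general
    {A : Type*} [Fintype A]
    {Ω : Type*} [MeasurableSpace Ω] (μ : Measure Ω)
    (X : ℕ → Ω → A)
    (p : A → ℝ) (hp0 : ∀ a, 0 ≤ p a)
    -- i.i.d. with marginal `p`: the law of every finite string is the product of the `p`'s
    (hiid : ∀ (n : ℕ) (x : Fin n → A),
      μ {ω | ∀ i : Fin n, X i ω = x i} = ENNReal.ofReal (∏ i : Fin n, p (x i)))
    -- codelength functions for strings of each length
    (L : (n : ℕ) → (Fin n → A) → ℝ)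
    -- Kraft's inequality for each block length
    (hKraft : ∀ n : ℕ, ∑ x : Fin n → A, (2 : ℝ) ^ (-(L n x)) ≤ 1)
    (lam : ℝ) (hlam : 0 < lam) (α : ℝ) (hα : α ∈ Set.Ioo (0 : ℝ) 1)
    -- the test statistic
    (W : ℕ → Ω → ℝ)
    (hW : ∀ n ω, W n ω =
      -(L n (fun i : Fin n => X i ω))
        - Real.logb 2 (∏ i : Fin n, p (X i ω)) - n * (lam / 2)) :
    μ {ω | ∃ n : ℕ, 1 ≤ n ∧ W n ω ≥ -Real.logb 2 α}
      ≤ ENNReal.ofReal (α / (2 ^ (lam / 2) - 1)) ∧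
    ((1 : ℝ) ≤ 2 ^ (lam / 2) - 1 →
      μ {ω | ∃ n : ℕ, 1 ≤ n ∧ W n ω ≥ -Real.logb 2 α} ≤ ENNReal.ofReal α) := by
  set b : ℝ := 2 ^ (lam / 2)
  have hb : 1 < b := one_lt_rpow one_lt_two (by positivity)
  have hstep : ∀ n, 1 ≤ n → μ {ω | W n ω ≥ -logb 2 α} ≤ ENNReal.ofReal (α * b⁻¹ ^ n) := by
    intro n _
    have hY : ∀ x : Fin n → A, μ ((fun ω (i : Fin n) => X i ω) ⁻¹' {x}) =
        ENNReal.ofReal (∏ i, p (x i)) := fun x => by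
      simpa only [Set.preimage, Set.mem_singleton_iff, funext_iff] using hiid n x
    simpa only [hW, ge_iff_le, two_rpow_neg_natCast_mul] using
      measure_codelength_gain_ge_le (fun x => Finset.prod_nonneg fun i _ => hp0 (x i)) hY
        (hKraft n) hα.1 (n * (lam / 2))
  have hmain := measure_exists_pos_le_of_le_geometric (E := fun n => {ω | W n ω ≥ -logb 2 α})
    hα.1.le (by positivity) (inv_lt_one_of_one_lt₀ hb) hstep
  rw [mul_div_assoc, inv_div_one_sub_inv hb, mul_one_div] at hmain
  exact ⟨hmain, fun h => hmain.trans (ENNReal.ofReal_le_ofReal (div_le_self hα.1.le h))⟩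

/-- For i.i.d. observations from `P₀` (pmf `p`) on a finite alphabet and a
prefix-free code with codelength function `L` satisfying Kraft's inequality, the stopping time
`N¹ = inf{n : -Lₙ(X₁ⁿ) - log₂ P₀(X₁ⁿ) - nλ/2 ≥ -log₂ α}` satisfies
`P₀(N¹ < ∞) ≤ α / (2^{λ/2} - 1)`, and in particular `P₀(N¹ < ∞) ≤ α` if `2^{λ/2} - 1 ≥ 1`. -/
theorem stmt0_universal_test_false_alarm
    {A : Type*} [Fintype A] [Nonempty A] [MeasurableSpace A] [MeasurableSingletonClass A]
    {Ω : Type*} [MeasurableSpace Ω] (μ : Measure Ω) [IsProbabilityMeasure μ]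
    (X : ℕ → Ω → A) (hXmeas : ∀ i, Measurable (X i))
    (p : A → ℝ) (hp0 : ∀ a, 0 ≤ p a) (hp1 : ∑ a, p a = 1)
    -- i.i.d. with marginal `p`: the law of every finite string is the product of the `p`'s
    (hiid : ∀ (n : ℕ) (x : Fin n → A),
      μ {ω | ∀ i : Fin n, X i ω = x i} = ENNReal.ofReal (∏ i : Fin n, p (x i)))
    -- codelength functions for strings of each length
    (L : (n : ℕ) → (Fin n → A) → ℝ)
    -- Kraft's inequality for each block length
    (hKraft : ∀ n : ℕ, ∑ x : Fin n → A, (2 : ℝ) ^ (-(L n x)) ≤ 1)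
    (lam : ℝ) (hlam : 0 < lam) (α : ℝ) (hα : α ∈ Set.Ioo (0 : ℝ) 1)
    -- the test statistic
    (W : ℕ → Ω → ℝ)
    (hW : ∀ n ω, W n ω =
      -(L n (fun i : Fin n => X i ω))
        - Real.logb 2 (∏ i : Fin n, p (X i ω)) - n * (lam / 2)) :
    μ {ω | ∃ n : ℕ, 1 ≤ n ∧ W n ω ≥ -Real.logb 2 α}
      ≤ ENNReal.ofReal (α / (2 ^ (lam / 2) - 1)) ∧
    ((1 : ℝ) ≤ 2 ^ (lam / 2) - 1 →
      μ {ω | ∃ n : ℕ, 1 ≤ n ∧ W n ω ≥ -Real.logb 2 α} ≤ ENNReal.ofReal α) :=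
  stmt0_universal_test_false_alarm_general μ X p hp0 hiid L hKraft lam hlam α hα W hW
end

section
/- Let X_1, X_2, ... be i.i.d. with distribution P_1 on a finite alphabet, P_0 another distribution on the same alphabet with D(P_1||P_0) > λ, and let L_n satisfy the strong pointwise universality max over x_1^n of (L_n(x_1^n) + log P_1(x_1^n)) = o(n). Define W_n = -L_n(X_1^n) - log P_0(X_1^n) - nλ/2 and stopping times N^0 = inf{n : W_n ≤ log β}, N^1 = inf{n : W_n ≥ -log α}. Then the miss-detection probability P_1(N^0 < N^1) = O(β^s) as β → 0, where s > 0 solves E_1[exp(-s(log(P_1(X_1)/P_0(X_1)) - λ/2 - ε))] = 1 for some fixed 0 < ε < λ/2 with D(P_1||P_0) > λ/2 + ε. -/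
open MeasureTheory ProbabilityTheory Filter Real

/-!
Strong universality with tolerance `ε` makes `W n` dominate, for `n ≥ n₀`, the random walk `S n`
with increments `Y = log (p1 / p0) - λ/2 - ε`; for small `β` the finitely many values of `W n`
with `n < n₀` all exceed `log β`. So on the miss-detection event `S` drops to `log β` at some
time `n ≥ n₀`. The first such times give a prefix-free family of strings. On a string where
`S ≤ log β` the likelihood ratio of `p1` to the tilted law `q = p1 * exp (-s * Y)`, a probability
vector by the choice of `s`, is at most `β ^ s`, and prefix-free cylinders have total `q`-mass
at most one.
-/

namespace FirstPassage

open Finset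

variable {A : Type*}

theorem prod_le_exp_mul_prod_tilt {p Y : A → ℝ} (hp : ∀ a, 0 ≤ p a) {s b : ℝ} (hs : 0 ≤ s)
    {n : ℕ} {y : Fin n → A} (hy : ∑ i, Y (y i) ≤ b) :
    ∏ i, p (y i) ≤ exp (s * b) * ∏ i, (p (y i) * exp (-s * Y (y i))) := by
  rw [prod_mul_distrib, ← exp_sum, ← mul_sum, mul_left_comm, ← exp_add]
  refine le_mul_of_one_le_right (prod_nonneg fun i _ => hp _) (one_le_exp ?_)
  nlinarith

variable [Fintype A]

theorem sum_take_mul_prod {q : A → ℝ} (hq : ∑ a, q a = 1) {n N : ℕ} (h : n ≤ N)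
    (f : (Fin n → A) → ℝ) :
    ∑ x : Fin N → A, f (Fin.take n h x) * ∏ i, q (x i) = ∑ y : Fin n → A, f y * ∏ i, q (y i) := by
  obtain ⟨k, rfl⟩ := Nat.exists_eq_add_of_le h
  rw [← (Fin.appendEquiv n k).sum_comp, Fintype.sum_prod_type]
  refine sum_congr rfl fun y _ => ?_
  have htake (z : Fin k → A) : Fin.take n h (Fin.append y z) = y :=
    (Fin.take_append_left n le_rfl y z).trans (Fin.take_eq_self y)
  simp only [Fin.appendEquiv, Equiv.coe_fn_mk, Fin.prod_univ_add, Fin.append_left,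
    Fin.append_right, htake, mul_left_comm _ (∏ i, q (y i)), ← mul_sum, ← Fintype.sum_pow, hq,
    one_pow, mul_one, mul_comm]

theorem sum_prod_le_one_of_prefixFree {q : A → ℝ} (hq0 : ∀ a, 0 ≤ q a) (hq : ∑ a, q a = 1)
    (F : (n : ℕ) → Finset (Fin n → A))
    (hF : ∀ {m n : ℕ} (h : m < n) (y : Fin n → A), y ∈ F n → Fin.take m h.le y ∉ F m) (N : ℕ) :
    ∑ n : Fin N, ∑ y ∈ F n, ∏ i, q (y i) ≤ 1 := by
  classical
  -- A string of length `n` carries the `q`-mass of its extensions to length `N`, and by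
  -- prefix-freeness each string of length `N` extends at most one member of the family.
  have hcard (x : Fin N → A) : #{n : Fin N | Fin.take n n.isLt.le x ∈ F n} ≤ 1 := by
    refine card_le_one.2 fun m hm n hn => ?_
    simp only [mem_filter, mem_univ, true_and] at hm hn
    by_contra hmn
    rcases lt_or_gt_of_ne (Fin.val_ne_of_ne hmn) with hlt | hlt
    · exact hF hlt _ hn hm
    · exact hF hlt _ hm hn
  calc ∑ n : Fin N, ∑ y ∈ F n, ∏ i, q (y i)
      = ∑ n : Fin N, ∑ x : Fin N → A,
          (if Fin.take n n.isLt.le x ∈ F n then 1 else 0) * ∏ i, q (x i) := by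
        refine sum_congr rfl fun n _ => ?_
        rw [sum_take_mul_prod hq n.isLt.le (fun y => if y ∈ F n then 1 else 0)]
        simp only [ite_mul, one_mul, zero_mul, sum_ite_mem, univ_inter]
    _ = ∑ x : Fin N → A,
          (#{n : Fin N | Fin.take n n.isLt.le x ∈ F n} : ℝ) * ∏ i, q (x i) := by
        rw [sum_comm]
        simp only [← sum_mul, sum_boole]
    _ ≤ ∑ x : Fin N → A, ∏ i, q (x i) :=
        sum_le_sum fun x _ =>
          mul_le_of_le_one_left (prod_nonneg fun i _ => hq0 _) (by exact_mod_cast hcard x)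
    _ = 1 := by rw [← Fintype.sum_pow, hq, one_pow]

noncomputable def firstPassageBelow (Y : A → ℝ) (b : ℝ) (n₀ n : ℕ) : Finset (Fin n → A) :=
  {y | n₀ ≤ n ∧ ∑ i, Y (y i) ≤ b ∧ ∀ m (h : m < n), n₀ ≤ m → b < ∑ i, Y (Fin.take m h.le y i)}

theorem take_notMem_firstPassageBelow {Y : A → ℝ} {b : ℝ} {n₀ m n : ℕ} (h : m < n)
    {y : Fin n → A} (hy : y ∈ firstPassageBelow Y b n₀ n) :
    Fin.take m h.le y ∉ firstPassageBelow Y b n₀ m := by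
  simp only [firstPassageBelow, mem_filter, mem_univ, true_and] at hy ⊢
  rintro ⟨hm, hle, -⟩
  exact (hy.2.2 m h hm).not_ge hle

theorem exists_mem_firstPassageBelow {Y : A → ℝ} {b : ℝ} {n₀ n : ℕ} {x : ℕ → A}
    (hn : n₀ ≤ n) (hx : ∑ i : Fin n, Y (x i) ≤ b) :
    ∃ k, (fun i : Fin k => x i) ∈ firstPassageBelow Y b n₀ k := by
  classical
  have hex : ∃ k, n₀ ≤ k ∧ ∑ i : Fin k, Y (x i) ≤ b := ⟨n, hn, hx⟩
  refine ⟨Nat.find hex, ?_⟩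
  simp only [firstPassageBelow, mem_filter, mem_univ, true_and]
  refine ⟨(Nat.find_spec hex).1, (Nat.find_spec hex).2, fun m hm hn₀m => ?_⟩
  exact lt_of_not_ge fun hle => Nat.find_min hex hm ⟨hn₀m, hle⟩

theorem sum_firstPassageBelow_le {p Y : A → ℝ} (hp : ∀ a, 0 ≤ p a) {s : ℝ} (hs : 0 ≤ s)
    (hroot : ∑ a, p a * exp (-s * Y a) = 1) (b : ℝ) (n₀ N : ℕ) :
    ∑ n : Fin N, ∑ y ∈ firstPassageBelow Y b n₀ n, ∏ i, p (y i) ≤ exp (s * b) :=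
  calc ∑ n : Fin N, ∑ y ∈ firstPassageBelow Y b n₀ n, ∏ i, p (y i)
      ≤ exp (s * b) * ∑ n : Fin N, ∑ y ∈ firstPassageBelow Y b n₀ n,
          ∏ i, (p (y i) * exp (-s * Y (y i))) := by
        simp only [mul_sum]
        refine sum_le_sum fun n _ => sum_le_sum fun y hy => prod_le_exp_mul_prod_tilt hp hs ?_
        exact (mem_filter.1 hy).2.2.1
    _ ≤ exp (s * b) * 1 := by
        gcongr
        exact sum_prod_le_one_of_prefixFree (fun a => mul_nonneg (hp a) (exp_pos _).le) hroot _
          take_notMem_firstPassageBelow N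
    _ = exp (s * b) := mul_one _

theorem measure_exists_walk_le {Ω : Type*} [MeasurableSpace Ω] (μ : Measure Ω) (X : ℕ → Ω → A)
    {p : A → ℝ} (hp : ∀ a, 0 ≤ p a)
    (hcyl : ∀ (n : ℕ) (y : Fin n → A),
      μ {ω | ∀ i : Fin n, X i ω = y i} ≤ ENNReal.ofReal (∏ i, p (y i)))
    {Y : A → ℝ} {s : ℝ} (hs : 0 ≤ s) (hroot : ∑ a, p a * exp (-s * Y a) = 1) (b : ℝ) (n₀ : ℕ) :
    μ {ω | ∃ n ≥ n₀, ∑ i : Fin n, Y (X i ω) ≤ b} ≤ ENNReal.ofReal (exp (s * b)) := by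
  have hsub : {ω | ∃ n ≥ n₀, ∑ i : Fin n, Y (X i ω) ≤ b}
      ⊆ ⋃ n, ⋃ y ∈ firstPassageBelow Y b n₀ n, {ω | ∀ i : Fin n, X i ω = y i} := by
    rintro ω ⟨n, hn, hle⟩
    obtain ⟨k, hk⟩ := exists_mem_firstPassageBelow (x := fun i => X i ω) hn hle
    exact Set.mem_iUnion.2 ⟨k, Set.mem_iUnion₂.2 ⟨_, hk, fun i => rfl⟩⟩
  have hprod_nonneg (n : ℕ) (y : Fin n → A) : 0 ≤ ∏ i, p (y i) := prod_nonneg fun i _ => hp _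
  calc μ {ω | ∃ n ≥ n₀, ∑ i : Fin n, Y (X i ω) ≤ b}
      ≤ ∑' n, ∑ y ∈ firstPassageBelow Y b n₀ n, μ {ω | ∀ i : Fin n, X i ω = y i} :=
        (measure_mono hsub).trans <|
          (measure_iUnion_le _).trans (ENNReal.tsum_le_tsum fun n => measure_biUnion_finset_le _ _)
    _ ≤ ENNReal.ofReal (exp (s * b)) := by
        refine ENNReal.tsum_le_of_sum_range_le fun N => ?_
        calc ∑ n ∈ range N, ∑ y ∈ firstPassageBelow Y b n₀ n, μ {ω | ∀ i : Fin n, X i ω = y i}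
            ≤ ∑ n ∈ range N, ∑ y ∈ firstPassageBelow Y b n₀ n, ENNReal.ofReal (∏ i, p (y i)) :=
              sum_le_sum fun n _ => sum_le_sum fun y _ => hcyl n y
          _ = ENNReal.ofReal (∑ n : Fin N, ∑ y ∈ firstPassageBelow Y b n₀ n, ∏ i, p (y i)) := by
              rw [Fin.sum_univ_eq_sum_range (fun n => ∑ y ∈ firstPassageBelow Y b n₀ n,
                  ∏ i, p (y i)),
                ENNReal.ofReal_sum_of_nonneg fun n _ => sum_nonneg fun y _ => hprod_nonneg n y]
              exact sum_congr rfl fun n _ =>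
                (ENNReal.ofReal_sum_of_nonneg fun y _ => hprod_nonneg n y).symm
          _ ≤ ENNReal.ofReal (exp (s * b)) :=
              ENNReal.ofReal_le_ofReal (sum_firstPassageBelow_le hp hs hroot b n₀ N)

end FirstPassage

theorem exists_lower_bound_on_short_strings {A : Type*} [Finite A] (n₀ : ℕ)
    (g : (n : ℕ) → (Fin n → A) → ℝ) : ∃ c, ∀ n < n₀, ∀ x, c ≤ g n x := by
  obtain ⟨c, hc⟩ := (Set.finite_range fun z : Σ n : Fin n₀, Fin n → A => g z.1 z.2).bddBelow
  exact ⟨c, fun n hn x => hc ⟨⟨⟨n, hn⟩, x⟩, rfl⟩⟩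

theorem sum_log_div_sub_le {A : Type*} {p1 p0 : A → ℝ} (hp1 : ∀ a, 0 < p1 a)
    (hp0 : ∀ a, 0 < p0 a) {n : ℕ} (x : Fin n → A) {ℓ c ε : ℝ}
    (h : ℓ + log (∏ i, p1 (x i)) ≤ n * ε) :
    ∑ i, (log (p1 (x i) / p0 (x i)) - c - ε) ≤ -ℓ - log (∏ i, p0 (x i)) - n * c := by
  simp only [log_div (hp1 _).ne' (hp0 _).ne', Finset.sum_sub_distrib, Finset.sum_const,
    Finset.card_univ, Fintype.card_fin, nsmul_eq_mul]
  rw [log_prod fun i _ => (hp1 _).ne'] at h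
  rw [log_prod fun i _ => (hp0 _).ne']
  linarith

theorem stmt4_miss_detection_bound_general
    {A : Type*} [Fintype A]
    {Ω : Type*} [MeasurableSpace Ω] (μ : Measure Ω)
    (X : ℕ → Ω → A)
    (p1 p0 : A → ℝ) (hp1pos : ∀ a, 0 < p1 a) (hp0pos : ∀ a, 0 < p0 a)
    -- i.i.d. with marginal `p1` (law of each finite string is the product law)
    (hiid : ∀ (n : ℕ) (x : Fin n → A),
      μ {ω | ∀ i : Fin n, X i ω = x i} = ENNReal.ofReal (∏ i : Fin n, p1 (x i)))
    (lam : ℝ)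
    (L : (n : ℕ) → (Fin n → A) → ℝ)
    -- strong pointwise universality: `max_x (Lₙ(x) + log P₁(x)) = o(n)`
    (hUniv : ∀ ε > (0:ℝ), ∃ n₀ : ℕ, ∀ n ≥ n₀, ∀ x : Fin n → A,
      |L n x + Real.log (∏ i : Fin n, p1 (x i))| ≤ n * ε)
    (W : ℕ → Ω → ℝ)
    (hW : ∀ n ω, W n ω = -(L n (fun i : Fin n => X i ω))
      - Real.log (∏ i : Fin n, p0 (X i ω)) - n * (lam / 2))
    (α : ℝ)
    (ε : ℝ) (hε : 0 < ε)
    (s : ℝ) (hs : 0 < s)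
    (hroot : ∑ a, p1 a * Real.exp (-s * (Real.log (p1 a / p0 a) - lam / 2 - ε)) = 1) :
    -- `P₁(N⁰ < N¹) = O(β^s)` as `β → 0`
    ∃ C : ℝ, 0 ≤ C ∧ ∃ β₀ ∈ Set.Ioo (0:ℝ) 1, ∀ β ∈ Set.Ioo (0:ℝ) β₀,
      μ {ω | ∃ n : ℕ, 1 ≤ n ∧ W n ω ≤ Real.log β ∧
              ∀ m : ℕ, 1 ≤ m → m ≤ n → W m ω < -Real.log α}
        ≤ ENNReal.ofReal (C * β ^ s) := by
  obtain ⟨n₀, hn₀⟩ := hUniv ε hε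
  obtain ⟨c, hc⟩ := exists_lower_bound_on_short_strings n₀
    fun n x => -(L n x) - log (∏ i, p0 (x i)) - n * (lam / 2)
  refine ⟨1, zero_le_one, min (1 / 2) (exp c),
    ⟨by positivity, (min_le_left _ _).trans_lt (by norm_num)⟩, fun β hβ => ?_⟩
  have hlogβ : log β < c := (log_lt_iff_lt_exp hβ.1).2 (hβ.2.trans_le (min_le_right _ _))
  refine (measure_mono ?_).trans <| (FirstPassage.measure_exists_walk_le μ X
    (fun a => (hp1pos a).le) (fun n y => (hiid n y).le) hs.le hroot (log β) n₀).trans_eq ?_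
  · rintro ω ⟨n, -, hWn, -⟩
    rw [hW] at hWn
    have hn : n₀ ≤ n := le_of_not_gt fun hn => (hc n hn _).not_gt (hWn.trans_lt hlogβ)
    exact ⟨n, hn, (sum_log_div_sub_le hp1pos hp0pos _ (abs_le.1 (hn₀ n hn _)).2).trans hWn⟩
  · rw [one_mul, rpow_def_of_pos hβ.1, mul_comm]

/-- Finite-alphabet universal sequential test under `H₁`: with i.i.d.
observations from `P₁`, `D(P₁‖P₀) > λ`, and a strongly pointwise-universal code
(`maxₓ |Lₙ(x₁ⁿ) + log P₁(x₁ⁿ)| = o(n)`), the miss-detection probability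
`P₁(N⁰ < N¹)` is `O(β^s)` as `β → 0`, where `s > 0` solves
`E₁[exp(-s(log(P₁(X₁)/P₀(X₁)) - λ/2 - ε))] = 1` for a fixed `0 < ε < λ/2` with
`D(P₁‖P₀) > λ/2 + ε`. -/
theorem stmt4_miss_detection_bound
    {A : Type*} [Fintype A] [Nonempty A] [MeasurableSpace A] [MeasurableSingletonClass A]
    {Ω : Type*} [MeasurableSpace Ω] (μ : Measure Ω) [IsProbabilityMeasure μ]
    (X : ℕ → Ω → A) (hXmeas : ∀ i, Measurable (X i))
    (p1 p0 : A → ℝ) (hp1pos : ∀ a, 0 < p1 a) (hp0pos : ∀ a, 0 < p0 a)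
    (hp1sum : ∑ a, p1 a = 1) (hp0sum : ∑ a, p0 a = 1)
    -- i.i.d. with marginal `p1` (law of each finite string is the product law)
    (hiid : ∀ (n : ℕ) (x : Fin n → A),
      μ {ω | ∀ i : Fin n, X i ω = x i} = ENNReal.ofReal (∏ i : Fin n, p1 (x i)))
    (lam : ℝ) (hlam : 0 < lam)
    (hdiv : ∑ a, p1 a * Real.log (p1 a / p0 a) > lam)
    (L : (n : ℕ) → (Fin n → A) → ℝ)
    -- strong pointwise universality: `max_x (Lₙ(x) + log P₁(x)) = o(n)`
    (hUniv : ∀ ε > (0:ℝ), ∃ n₀ : ℕ, ∀ n ≥ n₀, ∀ x : Fin n → A,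
      |L n x + Real.log (∏ i : Fin n, p1 (x i))| ≤ n * ε)
    (W : ℕ → Ω → ℝ)
    (hW : ∀ n ω, W n ω = -(L n (fun i : Fin n => X i ω))
      - Real.log (∏ i : Fin n, p0 (X i ω)) - n * (lam / 2))
    (α : ℝ) (hα : α ∈ Set.Ioo (0:ℝ) 1)
    (ε : ℝ) (hε : 0 < ε) (he2 : ε < lam / 2)
    (hDε : ∑ a, p1 a * Real.log (p1 a / p0 a) > lam / 2 + ε)
    (s : ℝ) (hs : 0 < s)
    (hroot : ∑ a, p1 a * Real.exp (-s * (Real.log (p1 a / p0 a) - lam / 2 - ε)) = 1) :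
    -- `P₁(N⁰ < N¹) = O(β^s)` as `β → 0`
    ∃ C : ℝ, 0 ≤ C ∧ ∃ β₀ ∈ Set.Ioo (0:ℝ) 1, ∀ β ∈ Set.Ioo (0:ℝ) β₀,
      μ {ω | ∃ n : ℕ, 1 ≤ n ∧ W n ω ≤ Real.log β ∧
              ∀ m : ℕ, 1 ≤ m → m ≤ n → W m ω < -Real.log α}
        ≤ ENNReal.ofReal (C * β ^ s) :=
  stmt4_miss_detection_bound_general μ X p1 p0 hp1pos hp0pos hiid lam L hUniv W hW α ε hε s hs hroot
end

section
/- Under hypothesis H_0 with i.i.d. observations from P_0, suppose the universal code satisfies: N_0*(ε) = sup{n ≥ 1 : |-L_n(X_1^n) - log P_0(X_1^n)| > nε} is finite almost surely for every ε > 0. Define W_n = -L_n(X_1^n) - log P_0(X_1^n) - nλ/2 and N^0 = inf{n : W_n ≤ log β}. Then N^0 / |log β| → 2/λ almost surely as β → 0. -/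
/-!
Since `Rₙ = o(n)` almost surely, `Wₙ / n → -λ/2`, i.e. for every `ε > 0` the walk `Wₙ` eventually
lies between `-n(λ/2 + ε)` and `-n(λ/2 - ε)`. For a level `-t` far below the finitely many values
taken before that happens, the first passage below `-t` is thus squeezed between `t / (λ/2 + ε)`
and `t / (λ/2 - ε) + O(1)`. Taking `t = |log β| → ∞` gives the claim.
-/

open MeasureTheory Filter Topology Real Asymptotics

/-- `sInf ∅ = 0`, so this is `0` when `W` never drops to `a`. -/
noncomputable def firstPassage (W : ℕ → ℝ) (a : ℝ) : ℕ := sInf {n | 1 ≤ n ∧ W n ≤ a}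

section FirstPassage

variable {W : ℕ → ℝ}

lemma firstPassage_le {a : ℝ} {n : ℕ} (hn : 1 ≤ n) (hW : W n ≤ a) : firstPassage W a ≤ n :=
  Nat.sInf_le ⟨hn, hW⟩

lemma firstPassage_spec {a : ℝ} (h : ∃ n, 1 ≤ n ∧ W n ≤ a) :
    1 ≤ firstPassage W a ∧ W (firstPassage W a) ≤ a :=
  Nat.sInf_mem h

lemma exists_le_neg_of_le_neg_mul {b t : ℝ} {n₀ : ℕ} (hb : 0 < b) (ht : 0 ≤ t)
    (hW : ∀ n ≥ n₀, W n ≤ -(b * n)) :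
    ∃ n : ℕ, 1 ≤ n ∧ (n : ℝ) ≤ t / b + (n₀ + 2) ∧ W n ≤ -t := by
  have hceil := Nat.ceil_lt_add_one (div_nonneg ht hb.le)
  refine ⟨n₀ + ⌈t / b⌉₊ + 1, by omega, by push_cast; linarith, ?_⟩
  have hbt : t ≤ b * ⌈t / b⌉₊ := (div_le_iff₀' hb).1 (Nat.le_ceil _)
  have hpos : (0 : ℝ) ≤ b * (n₀ + 1) := by positivity
  calc W (n₀ + ⌈t / b⌉₊ + 1) ≤ -(b * ↑(n₀ + ⌈t / b⌉₊ + 1)) := hW _ (by omega)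
    _ ≤ -t := by push_cast; linarith

lemma firstPassage_neg_le {b t : ℝ} {n₀ : ℕ} (hb : 0 < b) (ht : 0 ≤ t)
    (hW : ∀ n ≥ n₀, W n ≤ -(b * n)) : (firstPassage W (-t) : ℝ) ≤ t / b + (n₀ + 2) := by
  obtain ⟨n, hn, hnt, hWn⟩ := exists_le_neg_of_le_neg_mul hb ht hW
  exact le_trans (by exact_mod_cast firstPassage_le hn hWn) hnt

lemma le_mul_firstPassage_neg {b t : ℝ} {n₀ : ℕ} (hW : ∀ n ≥ n₀, -(b * n) ≤ W n)
    (hbefore : ∀ n < n₀, -t < W n) (hhit : ∃ n, 1 ≤ n ∧ W n ≤ -t) :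
    t ≤ b * firstPassage W (-t) := by
  obtain ⟨-, hτ⟩ := firstPassage_spec hhit
  have hn₀ : n₀ ≤ firstPassage W (-t) := by
    by_contra h
    exact (hbefore _ (not_le.1 h)).not_ge hτ
  linarith [hW _ hn₀]

variable {c : ℝ}

lemma eventually_le_neg_mul_of_tendsto_div {b : ℝ}
    (hW : Tendsto (fun n : ℕ => W n / n) atTop (𝓝 (-c))) (hb : b < c) :
    ∀ᶠ n : ℕ in atTop, W n ≤ -(b * n) := by
  filter_upwards [hW.eventually (gt_mem_nhds (neg_lt_neg hb)), eventually_gt_atTop 0]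
    with n hlt hn
  rw [div_lt_iff₀ (by exact_mod_cast hn)] at hlt
  linarith

lemma eventually_neg_mul_le_of_tendsto_div {b : ℝ}
    (hW : Tendsto (fun n : ℕ => W n / n) atTop (𝓝 (-c))) (hb : c < b) :
    ∀ᶠ n : ℕ in atTop, -(b * n) ≤ W n := by
  filter_upwards [hW.eventually (lt_mem_nhds (neg_lt_neg hb)), eventually_gt_atTop 0]
    with n hlt hn
  rw [lt_div_iff₀ (by exact_mod_cast hn)] at hlt
  linarith

lemma eventually_lt_firstPassage_neg_div {a : ℝ} (hc : 0 < c)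
    (hW : Tendsto (fun n : ℕ => W n / n) atTop (𝓝 (-c))) (ha : a < c⁻¹) :
    ∀ᶠ t in atTop, a < (firstPassage W (-t) : ℝ) / t := by
  obtain ⟨b, hab, hcb : c < b⟩ :=
    ((((tendsto_inv₀ hc.ne').mono_left nhdsWithin_le_nhds).eventually (lt_mem_nhds ha)).and
      (self_mem_nhdsWithin (s := Set.Ioi c))).exists
  obtain ⟨n₀, hn₀⟩ := eventually_atTop.1 (eventually_neg_mul_le_of_tendsto_div hW hcb)
  obtain ⟨n₁, hn₁⟩ := eventually_atTop.1 (eventually_le_neg_mul_of_tendsto_div hW (half_lt_self hc))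
  have hbefore : ∀ᶠ t in atTop, ∀ n ∈ Set.Iio n₀, -W n < t :=
    (eventually_all_finite (Set.finite_Iio n₀)).2 fun n _ => eventually_gt_atTop (-W n)
  filter_upwards [hbefore, eventually_gt_atTop 0] with t hbefore ht
  obtain ⟨n, hn, -, hWn⟩ := exists_le_neg_of_le_neg_mul (half_pos hc) ht.le hn₁
  have hτ := le_mul_firstPassage_neg hn₀ (fun n hn => by linarith [hbefore n hn]) ⟨n, hn, hWn⟩
  rw [lt_div_iff₀ ht]
  calc a * t < b⁻¹ * t := mul_lt_mul_of_pos_right hab ht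
    _ ≤ firstPassage W (-t) := (inv_mul_le_iff₀ (hc.trans hcb)).2 hτ

lemma eventually_firstPassage_neg_div_lt {a : ℝ} (hc : 0 < c)
    (hW : Tendsto (fun n : ℕ => W n / n) atTop (𝓝 (-c))) (ha : c⁻¹ < a) :
    ∀ᶠ t in atTop, (firstPassage W (-t) : ℝ) / t < a := by
  obtain ⟨b, hba, hb, hbc⟩ :=
    ((((tendsto_inv₀ hc.ne').mono_left nhdsWithin_le_nhds).eventually (gt_mem_nhds ha)).and
      (Ioo_mem_nhdsLT hc)).exists
  obtain ⟨n₀, hn₀⟩ := eventually_atTop.1 (eventually_le_neg_mul_of_tendsto_div hW hbc)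
  have hgap : 0 < a - b⁻¹ := sub_pos.2 hba
  filter_upwards [eventually_gt_atTop ((n₀ + 2) / (a - b⁻¹))] with t ht
  have ht0 : 0 < t := lt_trans (by positivity) ht
  have hτ := firstPassage_neg_le hb ht0.le hn₀
  rw [div_lt_iff₀ hgap] at ht
  rw [div_eq_inv_mul] at hτ
  rw [div_lt_iff₀ ht0]
  linarith

theorem tendsto_firstPassage_neg_div_atTop (hc : 0 < c)
    (hW : Tendsto (fun n : ℕ => W n / n) atTop (𝓝 (-c))) :
    Tendsto (fun t => (firstPassage W (-t) : ℝ) / t) atTop (𝓝 c⁻¹) :=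
  tendsto_order.2 ⟨fun _ ha => eventually_lt_firstPassage_neg_div hc hW ha,
    fun _ ha => eventually_firstPassage_neg_div_lt hc hW ha⟩

end FirstPassage

theorem stmt5_H0_stopping_time_asymptotics_general
    {Ω : Type*} [MeasurableSpace Ω] (μ : Measure Ω)
    (R : ℕ → Ω → ℝ)
    -- a.s. finiteness of `N₀*(ε)` for every `ε > 0`
    (hR : ∀ᵐ ω ∂μ, ∀ ε > (0:ℝ), ∃ n₀ : ℕ, ∀ n ≥ n₀, |R n ω| ≤ n * ε)
    (lam : ℝ) (hlam : 0 < lam)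
    (W : ℕ → Ω → ℝ) (hW : ∀ n ω, W n ω = R n ω - n * (lam / 2))
    (N0 : ℝ → Ω → ℕ)
    (hN0 : ∀ β ω, N0 β ω = sInf {n : ℕ | 1 ≤ n ∧ W n ω ≤ Real.log β}) :
    ∀ᵐ ω ∂μ, Tendsto (fun β : ℝ => (N0 β ω : ℝ) / |Real.log β|)
      (nhdsWithin 0 (Set.Ioo (0:ℝ) 1)) (nhds (2 / lam)) := by
  filter_upwards [hR] with ω hω
  have hRo : (fun n => R n ω) =o[atTop] (fun n : ℕ => (n : ℝ)) := isLittleO_iff.2 fun ε hε => by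
    obtain ⟨n₀, h⟩ := hω ε hε
    filter_upwards [eventually_ge_atTop n₀] with n hn
    simpa [mul_comm] using h n hn
  have hWdiv : Tendsto (fun n : ℕ => W n ω / n) atTop (𝓝 (-(lam / 2))) := by
    refine (zero_sub (lam / 2) ▸ hRo.tendsto_div_nhds_zero.sub_const (lam / 2)).congr' ?_
    filter_upwards [eventually_ne_atTop 0] with n hn
    rw [hW]
    field_simp
  have hlog : Tendsto (fun β => -log β) (𝓝[Set.Ioo 0 1] 0) atTop :=
    tendsto_neg_atBot_atTop.comp
      (tendsto_log_nhdsGT_zero.mono_left (nhdsWithin_mono _ Set.Ioo_subset_Ioi_self))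
  refine (inv_div lam 2 ▸ (tendsto_firstPassage_neg_div_atTop (half_pos hlam) hWdiv).comp
    hlog).congr' ?_
  filter_upwards [self_mem_nhdsWithin] with β hβ
  simp [hN0, firstPassage, abs_of_neg (log_neg hβ.1 hβ.2)]

/-- Under `H₀`, if the code redundancy `Rₙ = -Lₙ(X₁ⁿ) - log P₀(X₁ⁿ)`
satisfies `N₀*(ε) = sup{n : |Rₙ| > nε} < ∞` a.s. for every `ε > 0`, then for
`Wₙ = Rₙ - nλ/2` and `N⁰(β) = inf{n : Wₙ ≤ log β}` we have
`N⁰(β)/|log β| → 2/λ` almost surely as `β → 0`. -/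
theorem stmt5_H0_stopping_time_asymptotics
    {Ω : Type*} [MeasurableSpace Ω] (μ : Measure Ω) [IsProbabilityMeasure μ]
    (R : ℕ → Ω → ℝ)
    -- a.s. finiteness of `N₀*(ε)` for every `ε > 0`
    (hR : ∀ᵐ ω ∂μ, ∀ ε > (0:ℝ), ∃ n₀ : ℕ, ∀ n ≥ n₀, |R n ω| ≤ n * ε)
    (lam : ℝ) (hlam : 0 < lam)
    (W : ℕ → Ω → ℝ) (hW : ∀ n ω, W n ω = R n ω - n * (lam / 2))
    (N0 : ℝ → Ω → ℕ)
    (hN0 : ∀ β ω, N0 β ω = sInf {n : ℕ | 1 ≤ n ∧ W n ω ≤ Real.log β}) :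
    ∀ᵐ ω ∂μ, Tendsto (fun β : ℝ => (N0 β ω : ℝ) / |Real.log β|)
      (nhdsWithin 0 (Set.Ioo (0:ℝ) 1)) (nhds (2 / lam)) :=
  stmt5_H0_stopping_time_asymptotics_general μ R hR lam hlam W hW N0 hN0
end

section
/- Let X_1, X_2, ... be i.i.d. on a finite alphabet A with distribution P, and let P_c(x_1^n) = Π_{t=1}^n (v(x_t | x_1^{t-1}) + 1/2)/(t - 1 + |A|/2) be the Krichevsky–Trofimov estimator, where v(i | x_1^{t-1}) counts occurrences of symbol i in x_1^{t-1}. Then the pointwise redundancy satisfies (1/n)(-log P_c(X_1^n) + log P(X_1^n)) = O(log n / n) uniformly over sequences, and in particular -（1/n) log P_c(X_1^n) → H(P) almost surely, where H(P) is the entropy of P. -/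
open MeasureTheory ProbabilityTheory Filter Real
open Finset
open scoped Nat Topology

/-!
Write `v` for the symbol counts of `x₁ⁿ` and `k = |A|`. Telescoping the sequential product gives
`P_c(x₁ⁿ) = ∏ₐ (1/2)^(vₐ) / (k/2)^(n)` in rising factorials, and comparing rising factorials with
factorials gives `(n + 1)^(-2k) ≤ P_c(x₁ⁿ) · (n choose v) ≤ n + 1`. The multinomial theorem gives
`(n choose v) · ∏ₐ pₐ^vₐ ≤ (∑ₐ pₐ)ⁿ = 1`, whence the uniform redundancy bound. Stirling's formula
gives `log (n choose v) = n H(v/n) + O(log n)`, so `-(1/n) log P_c(x₁ⁿ) = H(v/n) + o(1)`, and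
`vₐ/n → pₐ` almost surely by the strong law of large numbers for the indicators of `{Xᵢ = a}`,
which are pairwise independent and identically distributed by the cylinder formula.
-/

section Pochhammer

lemma prod_range_add_eq_ascPochhammer_eval {R : Type*} [CommSemiring R] (s : R) (n : ℕ) :
    ∏ t ∈ range n, ((t : R) + s) = (ascPochhammer R n).eval s := by
  induction n with
  | zero => simp
  | succ n ih => rw [prod_range_succ, ih, ascPochhammer_succ_eval, add_comm (n : R)]

lemma ascPochhammer_eval_nonneg {s : ℝ} (hs : 0 ≤ s) (n : ℕ) :
    0 ≤ (ascPochhammer ℝ n).eval s := by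
  rw [← prod_range_add_eq_ascPochhammer_eval]
  exact prod_nonneg fun t _ => by positivity

lemma ascPochhammer_eval_le_of_le {s s' : ℝ} (hs : 0 ≤ s) (h : s ≤ s') (n : ℕ) :
    (ascPochhammer ℝ n).eval s ≤ (ascPochhammer ℝ n).eval s' := by
  simp only [← prod_range_add_eq_ascPochhammer_eval]
  exact prod_le_prod (fun t _ => by positivity) fun t _ => by linarith

lemma factorial_le_succ_mul_ascPochhammer_eval_half (n : ℕ) :
    (n ! : ℝ) ≤ (n + 1) * (ascPochhammer ℝ n).eval (1 / 2) := by
  induction n with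
  | zero => simp
  | succ n ih =>
    rw [ascPochhammer_succ_eval, Nat.factorial_succ]
    push_cast
    nlinarith [ascPochhammer_eval_nonneg (s := 1 / 2) (by norm_num) n]

lemma ascPochhammer_eval_le_factorial_mul_pow {s : ℝ} {k : ℕ} (hs : 0 ≤ s) (hsk : s ≤ k)
    (n : ℕ) : (ascPochhammer ℝ n).eval s ≤ n ! * (n + 1 : ℝ) ^ k := by
  induction n with
  | zero => simp
  | succ n ih =>
    have hbern : (n + 1 : ℝ) ^ k * (n + 1 + k) ≤ (n + 1) * (n + 1 + 1) ^ k := by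
      have hinv : (0 : ℝ) ≤ 1 / (n + 1) := by positivity
      have h := one_add_mul_le_pow (a := 1 / (n + 1 : ℝ)) (by linarith) k
      calc (n + 1 : ℝ) ^ k * (n + 1 + k) = (n + 1) ^ k * (n + 1) * (1 + k * (1 / (n + 1))) := by
            field_simp
        _ ≤ (n + 1) ^ k * (n + 1) * (1 + 1 / (n + 1)) ^ k := by gcongr
        _ = (n + 1) * (n + 1 + 1) ^ k := by
            rw [mul_right_comm, ← mul_pow]; field_simp
    rw [ascPochhammer_succ_eval, Nat.factorial_succ]
    push_cast
    calc (ascPochhammer ℝ n).eval s * (s + n) ≤ (n ! * (n + 1 : ℝ) ^ k) * (n + 1 + k) :=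
          mul_le_mul ih (by linarith) (by positivity) (by positivity)
      _ ≤ (n + 1) * n ! * (n + 1 + 1) ^ k := by
          nlinarith [Nat.cast_nonneg (α := ℝ) n !]

end Pochhammer

section Multinomial

lemma multinomial_mul_prod_pow_le_one {ι : Type*} [Fintype ι] [DecidableEq ι] {q : ι → ℝ}
    (hq : ∀ i, 0 ≤ q i) (hq1 : ∑ i, q i = 1) (v : ι → ℕ) :
    (Nat.multinomial univ v : ℝ) * ∏ i, q i ^ v i ≤ 1 := by
  calc (Nat.multinomial univ v : ℝ) * ∏ i, q i ^ v i
      ≤ ∑ w ∈ piAntidiag univ (∑ i, v i), (Nat.multinomial univ w : ℝ) * ∏ i, q i ^ w i :=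
        single_le_sum (f := fun w => (Nat.multinomial univ w : ℝ) * ∏ i, q i ^ w i)
          (fun w _ => mul_nonneg (by positivity) (prod_nonneg fun i _ => pow_nonneg (hq i) _))
          (by simp)
    _ = 1 := by rw [← sum_pow_eq_sum_piAntidiag, hq1, one_pow]

lemma sub_le_log_factorial (m : ℕ) : m * log m - m ≤ log (m ! : ℝ) := by
  have h := Real.pow_div_factorial_le_exp m (Nat.cast_nonneg m) m
  rcases m.eq_zero_or_pos with rfl | hm
  · simp
  have hm' : (0 : ℝ) < m := by exact_mod_cast hm
  rw [div_le_iff₀ (by positivity)] at h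
  have := log_le_log (by positivity) h
  rw [log_pow, log_mul (exp_pos _).ne' (by positivity), log_exp] at this
  linarith

lemma log_factorial_le (m : ℕ) : log (m ! : ℝ) ≤ m * log m - m + log (m + 1) + 1 := by
  rcases m.eq_zero_or_pos with rfl | hm
  · simp
  have hm' : (0 : ℝ) < m := by exact_mod_cast hm
  -- Stirling's sequence `m! / (√(2m) (m/e)^m)` decreases from its value `e/√2` at `m = 1`.
  have hseq : Stirling.stirlingSeq m ≤ exp 1 / √2 := by
    rw [← Stirling.stirlingSeq_one]
    obtain ⟨k, rfl⟩ := Nat.exists_eq_add_of_le' hm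
    exact Stirling.stirlingSeq'_antitone (Nat.zero_le k)
  rw [Stirling.stirlingSeq, div_le_iff₀ (by positivity)] at hseq
  have := log_le_log (by positivity) hseq
  rw [log_mul (by positivity) (by positivity), log_div (by positivity) (by positivity), log_exp,
    log_mul (by positivity) (by positivity), log_pow, log_div hm'.ne' (exp_pos _).ne', log_exp,
    log_sqrt (x := 2 * m) (by positivity), log_sqrt (x := 2) (by norm_num),
    log_mul two_ne_zero hm'.ne'] at this
  have hlog : log (m : ℝ) ≤ log (m + 1) := log_le_log hm' (by linarith)
  have hlog0 : 0 ≤ log (m : ℝ) := log_natCast_nonneg m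
  linarith

lemma natCast_mul_negMulLog_div {v n : ℕ} (h : v ≤ n) :
    (n : ℝ) * negMulLog (v / n) = negMulLog v + v * log n := by
  rcases v.eq_zero_or_pos with rfl | hv
  · simp
  have hv' : (0 : ℝ) < v := by exact_mod_cast hv
  have hn' : (0 : ℝ) < n := hv'.trans_le (by exact_mod_cast h)
  rw [negMulLog, negMulLog, log_div hv'.ne' hn'.ne']
  field_simp
  ring

lemma abs_log_multinomial_sub_le {ι : Type*} [Fintype ι] [DecidableEq ι] {v : ι → ℕ} {n : ℕ}
    (hv : ∑ i, v i = n) :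
    |log (Nat.multinomial univ v) - n * ∑ i, negMulLog (v i / n)|
      ≤ (Fintype.card ι + 1) * (log (n + 1) + 1) := by
  have hvn : ∀ i, v i ≤ n := fun i => hv ▸ single_le_sum (by simp) (mem_univ i)
  have hvn' : ∀ i, (v i : ℝ) ≤ n := fun i => by exact_mod_cast hvn i
  have hsum : ∑ i, (v i : ℝ) = n := by exact_mod_cast hv
  have hspec : log (Nat.multinomial univ v) + ∑ i, log ((v i) ! : ℝ) = log (n ! : ℝ) := by
    rw [← log_prod (fun i _ => by positivity),
      ← log_mul (Nat.cast_ne_zero.mpr (Nat.multinomial_pos _ _).ne') (by positivity),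
      ← hv, ← Nat.multinomial_spec univ v]
    push_cast; ring_nf
  have hent : n * ∑ i, negMulLog (v i / n) = ∑ i, negMulLog (v i) + n * log n := by
    rw [mul_sum, sum_congr rfl fun i _ => natCast_mul_negMulLog_div (hvn i), sum_add_distrib,
      ← sum_mul, hsum]
  have hlower : ∑ i, ((v i : ℝ) * log (v i) - v i) ≤ ∑ i, log ((v i) ! : ℝ) :=
    sum_le_sum fun i _ => sub_le_log_factorial (v i)
  have hupper :
      ∑ i, log ((v i) ! : ℝ) ≤ ∑ i, ((v i : ℝ) * log (v i) - v i + (log (n + 1) + 1)) := by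
    refine sum_le_sum fun i _ => (log_factorial_le (v i)).trans ?_
    have := log_le_log (by positivity) (show (v i : ℝ) + 1 ≤ n + 1 by linarith [hvn' i])
    linarith
  simp only [sum_add_distrib, sum_sub_distrib, sum_const, card_univ, nsmul_eq_mul, hsum]
    at hlower hupper
  rw [hent]
  simp only [negMulLog, neg_mul, sum_neg_distrib]
  have hn_lower := sub_le_log_factorial n
  have hn_upper := log_factorial_le n
  have hL : 0 ≤ log (n + 1 : ℝ) := log_nonneg (by linarith [Nat.cast_nonneg (α := ℝ) n])
  rw [abs_le]
  constructor <;> linarith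

lemma tendsto_log_natCast_add_one_div :
    Tendsto (fun n : ℕ => log (n + 1) / n) atTop (𝓝 0) := by
  have h := (tendsto_pow_log_div_mul_add_atTop 1 (-1) 1 one_ne_zero).comp
    (tendsto_natCast_atTop_atTop.atTop_add (tendsto_const_nhds (x := (1 : ℝ))))
  refine h.congr fun n => ?_
  simp

lemma tendsto_log_multinomial_div {ι : Type*} [Fintype ι] [DecidableEq ι] {v : ℕ → ι → ℕ}
    (hv : ∀ n, ∑ i, v n i = n) {q : ι → ℝ}
    (hq : ∀ i, Tendsto (fun n => (v n i : ℝ) / n) atTop (𝓝 (q i))) :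
    Tendsto (fun n => log (Nat.multinomial univ (v n)) / n) atTop
      (𝓝 (∑ i, negMulLog (q i))) := by
  have hent :
      Tendsto (fun n => ∑ i, negMulLog (v n i / n)) atTop (𝓝 (∑ i, negMulLog (q i))) :=
    tendsto_finsetSum _ fun i _ => (continuous_negMulLog.tendsto _).comp (hq i)
  have herr :
      Tendsto (fun n : ℕ => (Fintype.card ι + 1) * ((log (n + 1) + 1) / n)) atTop (𝓝 0) := by
    simpa [add_div] using (tendsto_log_natCast_add_one_div.add
      tendsto_one_div_atTop_nhds_zero_nat).const_mul ((Fintype.card ι : ℝ) + 1)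
  refine hent.congr_dist (squeeze_zero (fun n => dist_nonneg) (fun n => ?_) herr)
  rcases n.eq_zero_or_pos with rfl | hn
  · simp
  have hn' : (0 : ℝ) < n := by exact_mod_cast hn
  rw [dist_comm, dist_eq_norm, norm_eq_abs, ← mul_div_assoc, le_div_iff₀ hn',
    ← abs_of_pos hn', ← abs_mul, abs_of_pos hn', sub_mul, div_mul_cancel₀ _ hn'.ne', mul_comm]
  exact abs_log_multinomial_sub_le (hv n)

end Multinomial

section SymbolCount

variable {A : Type*} [DecidableEq A]

def symbolCount (x : ℕ → A) (n : ℕ) (a : A) : ℕ := #{i ∈ range n | x i = a}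

lemma symbolCount_succ (x : ℕ → A) (n : ℕ) (a : A) :
    symbolCount x (n + 1) a = symbolCount x n a + if x n = a then 1 else 0 := by
  by_cases h : x n = a <;> simp [symbolCount, range_add_one, filter_insert, h]

lemma symbolCount_le (x : ℕ → A) (n : ℕ) (a : A) : symbolCount x n a ≤ n :=
  (card_filter_le _ _).trans_eq (card_range n)

variable [Fintype A]

lemma sum_symbolCount (x : ℕ → A) (n : ℕ) : ∑ a, symbolCount x n a = n := by
  simpa [symbolCount] using
    (card_eq_sum_card_fiberwise (s := range n) fun i _ => mem_univ (x i)).symm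

lemma prod_range_eq_prod_pow_symbolCount {M : Type*} [CommMonoid M] (f : A → M) (x : ℕ → A)
    (n : ℕ) : ∏ i ∈ range n, f (x i) = ∏ a, f a ^ symbolCount x n a := by
  rw [prod_comp]
  refine prod_subset (subset_univ _) fun a _ ha => ?_
  rw [filter_false_of_mem (by simpa using ha), card_empty, pow_zero]

end SymbolCount

section KT

variable {A : Type*} [Fintype A] [DecidableEq A]

noncomputable def ktEstimator (x : ℕ → A) (n : ℕ) : ℝ :=
  ∏ t ∈ range n, ((symbolCount x t (x t) : ℝ) + 1 / 2) / ((t : ℝ) + (Fintype.card A : ℝ) / 2)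

lemma prod_range_symbolCount_add_half (x : ℕ → A) (n : ℕ) :
    ∏ t ∈ range n, ((symbolCount x t (x t) : ℝ) + 1 / 2)
      = ∏ a, (ascPochhammer ℝ (symbolCount x n a)).eval (1 / 2) := by
  induction n with
  | zero => simp [symbolCount]
  | succ n ih =>
    have step : ∀ a, (ascPochhammer ℝ (symbolCount x (n + 1) a)).eval (1 / 2)
        = (ascPochhammer ℝ (symbolCount x n a)).eval (1 / 2)
          * if x n = a then (symbolCount x n a : ℝ) + 1 / 2 else 1 := by
      intro a
      by_cases h : x n = a <;> simp [symbolCount_succ, h, ascPochhammer_succ_eval, add_comm]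
    rw [prod_range_succ, ih, prod_congr rfl fun a _ => step a, prod_mul_distrib, prod_ite_eq]
    simp

lemma ktEstimator_eq (x : ℕ → A) (n : ℕ) :
    ktEstimator x n = (∏ a, (ascPochhammer ℝ (symbolCount x n a)).eval (1 / 2))
      / (ascPochhammer ℝ n).eval ((Fintype.card A : ℝ) / 2) := by
  rw [ktEstimator, prod_div_distrib, prod_range_symbolCount_add_half,
    prod_range_add_eq_ascPochhammer_eval]

lemma multinomial_mul_prod_factorial_symbolCount (x : ℕ → A) (n : ℕ) :
    (Nat.multinomial univ (symbolCount x n) : ℝ) * ∏ a, ((symbolCount x n a) ! : ℝ) = n ! := by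
  rw [mul_comm]
  exact_mod_cast (sum_symbolCount x n) ▸ Nat.multinomial_spec univ (symbolCount x n)

variable [Nonempty A]

lemma ktEstimator_pos (x : ℕ → A) (n : ℕ) : 0 < ktEstimator x n := by
  rw [ktEstimator_eq]
  exact div_pos (prod_pos fun a _ => ascPochhammer_pos _ _ (by norm_num))
    (ascPochhammer_pos _ _ (by positivity))

lemma ktEstimator_mul_multinomial_le (x : ℕ → A) (n : ℕ) :
    ktEstimator x n * Nat.multinomial univ (symbolCount x n) ≤ n + 1 := by
  have hk : (1 : ℝ) ≤ Fintype.card A := by exact_mod_cast Fintype.card_pos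
  have hden : (n ! : ℝ) ≤ (n + 1) * (ascPochhammer ℝ n).eval ((Fintype.card A : ℝ) / 2) :=
    (factorial_le_succ_mul_ascPochhammer_eval_half n).trans <| by
      gcongr; exact ascPochhammer_eval_le_of_le (by norm_num) (by linarith) n
  have hnum : ∏ a, (ascPochhammer ℝ (symbolCount x n a)).eval (1 / 2)
      ≤ ∏ a, ((symbolCount x n a) ! : ℝ) := by
    refine prod_le_prod (fun a _ => ascPochhammer_eval_nonneg (by norm_num) _) fun a _ => ?_
    rw [← ascPochhammer_eval_one]
    exact ascPochhammer_eval_le_of_le (by norm_num) (by norm_num) _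
  rw [ktEstimator_eq, div_mul_eq_mul_div, div_le_iff₀ (ascPochhammer_pos _ _ (by positivity))]
  calc (∏ a, (ascPochhammer ℝ (symbolCount x n a)).eval (1 / 2))
        * Nat.multinomial univ (symbolCount x n)
      ≤ (∏ a, ((symbolCount x n a) ! : ℝ)) * Nat.multinomial univ (symbolCount x n) := by
        gcongr
    _ = n ! := by rw [mul_comm, multinomial_mul_prod_factorial_symbolCount]
    _ ≤ _ := hden

lemma one_le_pow_mul_ktEstimator_mul_multinomial (x : ℕ → A) (n : ℕ) :
    1 ≤ (n + 1 : ℝ) ^ (2 * Fintype.card A)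
      * (ktEstimator x n * Nat.multinomial univ (symbolCount x n)) := by
  have hden := ascPochhammer_eval_le_factorial_mul_pow (s := (Fintype.card A : ℝ) / 2)
    (k := Fintype.card A) (by positivity) (by linarith [Nat.cast_nonneg (α := ℝ) (Fintype.card A)])
    n
  have hnum : ∏ a, ((symbolCount x n a) ! : ℝ)
      ≤ (n + 1 : ℝ) ^ Fintype.card A
        * ∏ a, (ascPochhammer ℝ (symbolCount x n a)).eval (1 / 2) := by
    calc ∏ a, ((symbolCount x n a) ! : ℝ)
        ≤ ∏ a, ((symbolCount x n a + 1) * (ascPochhammer ℝ (symbolCount x n a)).eval (1 / 2)) :=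
          prod_le_prod (fun a _ => by positivity)
            fun a _ => factorial_le_succ_mul_ascPochhammer_eval_half _
      _ ≤ ∏ a, (n + 1 : ℝ) * (ascPochhammer ℝ (symbolCount x n a)).eval (1 / 2) := by
          refine prod_le_prod (fun a _ => mul_nonneg (by positivity)
            (ascPochhammer_eval_nonneg (by norm_num) _)) fun a _ => ?_
          gcongr
          · exact ascPochhammer_eval_nonneg (by norm_num) _
          exact_mod_cast symbolCount_le x n a
      _ = _ := by rw [prod_mul_distrib, prod_const, card_univ]
  rw [ktEstimator_eq, div_mul_eq_mul_div, mul_div_assoc',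
    le_div_iff₀ (ascPochhammer_pos _ _ (by positivity)), one_mul]
  calc (ascPochhammer ℝ n).eval ((Fintype.card A : ℝ) / 2)
      ≤ (Nat.multinomial univ (symbolCount x n) * ∏ a, ((symbolCount x n a) ! : ℝ))
          * (n + 1) ^ Fintype.card A := by
        rwa [multinomial_mul_prod_factorial_symbolCount]
    _ ≤ Nat.multinomial univ (symbolCount x n) * ((n + 1 : ℝ) ^ Fintype.card A
          * ∏ a, (ascPochhammer ℝ (symbolCount x n a)).eval (1 / 2))
          * (n + 1) ^ Fintype.card A := by
        gcongr
    _ = _ := by ring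

lemma abs_log_ktEstimator_add_log_multinomial_le (x : ℕ → A) (n : ℕ) :
    |log (ktEstimator x n) + log (Nat.multinomial univ (symbolCount x n))|
      ≤ 2 * Fintype.card A * log (n + 1) := by
  have hk : (1 : ℝ) ≤ Fintype.card A := by exact_mod_cast Fintype.card_pos
  have hlog : 0 ≤ log (n + 1 : ℝ) := log_nonneg (by linarith [Nat.cast_nonneg (α := ℝ) n])
  have hmult : (0 : ℝ) < Nat.multinomial univ (symbolCount x n) := by
    exact_mod_cast Nat.multinomial_pos _ _
  have hprod := mul_pos (ktEstimator_pos x n) hmult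
  rw [← log_mul (ktEstimator_pos x n).ne' hmult.ne']
  have hupper := log_le_log hprod (ktEstimator_mul_multinomial_le x n)
  have hlower := log_le_log one_pos (one_le_pow_mul_ktEstimator_mul_multinomial x n)
  rw [log_one, log_mul (by positivity) hprod.ne', log_pow] at hlower
  push_cast at hlower
  rw [abs_le]
  constructor <;> nlinarith

lemma log_prod_sub_log_ktEstimator_le {p : A → ℝ} (hp : ∀ a, 0 < p a) (hp1 : ∑ a, p a = 1)
    (x : ℕ → A) (n : ℕ) :
    log (∏ i ∈ range n, p (x i)) - log (ktEstimator x n)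
      ≤ 2 * Fintype.card A * log (n + 1) := by
  have hmult : (0 : ℝ) < Nat.multinomial univ (symbolCount x n) := by
    exact_mod_cast Nat.multinomial_pos _ _
  have hprob := multinomial_mul_prod_pow_le_one (fun a => (hp a).le) hp1 (symbolCount x n)
  rw [← prod_range_eq_prod_pow_symbolCount] at hprob
  have hP : 0 < ∏ i ∈ range n, p (x i) := prod_pos fun i _ => hp (x i)
  have := log_le_log (by positivity) hprob
  rw [log_one, log_mul hmult.ne' hP.ne'] at this
  linarith [abs_le.mp (abs_log_ktEstimator_add_log_multinomial_le x n)]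

lemma tendsto_neg_log_ktEstimator_div {x : ℕ → A} {q : A → ℝ}
    (hq : ∀ a, Tendsto (fun n => (symbolCount x n a : ℝ) / n) atTop (𝓝 (q a))) :
    Tendsto (fun n => -log (ktEstimator x n) / n) atTop (𝓝 (∑ a, negMulLog (q a))) := by
  have herr : Tendsto (fun n : ℕ => 2 * Fintype.card A * (log (n + 1) / n)) atTop (𝓝 0) := by
    simpa using tendsto_log_natCast_add_one_div.const_mul (2 * Fintype.card A : ℝ)
  refine (tendsto_log_multinomial_div (sum_symbolCount x) hq).congr_dist
    (squeeze_zero (fun n => dist_nonneg) (fun n => ?_) herr)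
  rw [dist_eq_norm, norm_eq_abs, ← mul_div_assoc, div_sub_div_same, sub_neg_eq_add, abs_div,
    Nat.abs_cast, add_comm]
  exact div_le_div_of_nonneg_right (abs_log_ktEstimator_add_log_multinomial_le x n)
    (by positivity)

end KT

section IID

variable {A : Type*} [MeasurableSpace A] [MeasurableSingletonClass A]
  {Ω : Type*} [MeasurableSpace Ω] {P : Measure Ω} {X : ℕ → Ω → A} {p : A → ℝ}

def HasProductCylinders (P : Measure Ω) (X : ℕ → Ω → A) (p : A → ℝ) : Prop :=
  ∀ (n : ℕ) (x : Fin n → A),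
    P {ω | ∀ i : Fin n, X i ω = x i} = ENNReal.ofReal (∏ i : Fin n, p (x i))

namespace HasProductCylinders

lemma measure_forall_fin_mem (hiid : HasProductCylinders P X p) (hX : ∀ i, Measurable (X i))
    (hp : ∀ a, 0 ≤ p a) {n : ℕ} (t : Fin n → Finset A) :
    P {ω | ∀ i : Fin n, X i ω ∈ t i} = ENNReal.ofReal (∏ i, ∑ a ∈ t i, p a) := by
  set V : Ω → Fin n → A := fun ω i => X i ω
  have hV : Measurable V := measurable_pi_lambda _ fun i => hX i
  have hset : {ω | ∀ i : Fin n, X i ω ∈ t i} = V ⁻¹' (Fintype.piFinset t : Set (Fin n → A)) := by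
    ext ω; simp [V]
  have hcyl : ∀ x, P (V ⁻¹' {x}) = ENNReal.ofReal (∏ i, p (x i)) := fun x => by
    rw [← hiid n x]; congr 1; ext ω; simp [V, funext_iff]
  rw [hset, ← sum_measure_preimage_singleton _ fun x _ => hV (measurableSet_singleton x),
    prod_univ_sum, ENNReal.ofReal_sum_of_nonneg fun x _ => prod_nonneg fun i _ => hp _]
  exact sum_congr rfl fun x _ => hcyl x

variable [Fintype A]

lemma measure_forall_mem (hiid : HasProductCylinders P X p) (hX : ∀ i, Measurable (X i))
    (hp : ∀ a, 0 ≤ p a) (hp1 : ∑ a, p a = 1) (s : Finset ℕ) (t : ℕ → Finset A) :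
    P {ω | ∀ j ∈ s, X j ω ∈ t j} = ENNReal.ofReal (∏ j ∈ s, ∑ a ∈ t j, p a) := by
  classical
  set n := s.sup id + 1
  have hs : ∀ j ∈ s, j < n := fun j hj => Nat.lt_succ_of_le (le_sup (f := id) hj)
  have h := hiid.measure_forall_fin_mem hX hp fun i : Fin n => if (i : ℕ) ∈ s then t i else univ
  convert h using 2
  · ext ω
    simp only [Set.mem_ofPred_eq]
    constructor
    · intro hω i
      split_ifs with hi
      · exact hω i hi
      · exact mem_univ _
    · intro hω j hj
      simpa [hj] using hω ⟨j, hs j hj⟩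
  · have : ∀ i : Fin n, ∑ a ∈ (if (i : ℕ) ∈ s then t i else univ), p a
        = if (i : ℕ) ∈ s then ∑ a ∈ t i, p a else 1 := fun i => by split_ifs <;> simp [hp1]
    rw [prod_congr rfl fun i _ => this i,
      Fin.prod_univ_eq_prod_range (fun j => if j ∈ s then ∑ a ∈ t j, p a else 1), prod_ite_mem,
      inter_eq_right.mpr fun j hj => mem_range.mpr (hs j hj)]

lemma measure_preimage (hiid : HasProductCylinders P X p) (hX : ∀ i, Measurable (X i))
    (hp : ∀ a, 0 ≤ p a) (hp1 : ∑ a, p a = 1) (i : ℕ) (S : Finset A) :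
    P (X i ⁻¹' S) = ENNReal.ofReal (∑ a ∈ S, p a) := by
  simpa [Set.preimage] using hiid.measure_forall_mem hX hp hp1 {i} fun _ => S

lemma measure_preimage_inter_preimage (hiid : HasProductCylinders P X p)
    (hX : ∀ i, Measurable (X i)) (hp : ∀ a, 0 ≤ p a) (hp1 : ∑ a, p a = 1) {i j : ℕ} (hij : i ≠ j)
    (S T : Finset A) :
    P (X i ⁻¹' S ∩ X j ⁻¹' T) = ENNReal.ofReal ((∑ a ∈ S, p a) * ∑ a ∈ T, p a) := by
  have h := hiid.measure_forall_mem hX hp hp1 {i, j} fun l => if l = i then S else T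
  rw [prod_pair hij, if_pos rfl, if_neg hij.symm] at h
  convert h using 2
  ext ω
  simp [hij.symm]

lemma identDistrib (hiid : HasProductCylinders P X p) (hX : ∀ i, Measurable (X i))
    (hp : ∀ a, 0 ≤ p a) (hp1 : ∑ a, p a = 1) (i j : ℕ) : IdentDistrib (X i) (X j) P P where
  aemeasurable_fst := (hX i).aemeasurable
  aemeasurable_snd := (hX j).aemeasurable
  map_eq := Measure.ext fun S hS => by
    classical
    rw [Measure.map_apply (hX i) hS, Measure.map_apply (hX j) hS, ← S.coe_toFinset,
      hiid.measure_preimage hX hp hp1, hiid.measure_preimage hX hp hp1]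

lemma indepFun (hiid : HasProductCylinders P X p) (hX : ∀ i, Measurable (X i))
    (hp : ∀ a, 0 ≤ p a) (hp1 : ∑ a, p a = 1) {i j : ℕ} (hij : i ≠ j) :
    IndepFun (X i) (X j) P := by
  classical
  refine indepFun_iff_measure_inter_preimage_eq_mul.mpr fun S T _ _ => ?_
  rw [← S.coe_toFinset, ← T.coe_toFinset, hiid.measure_preimage_inter_preimage hX hp hp1 hij,
    hiid.measure_preimage hX hp hp1, hiid.measure_preimage hX hp hp1,
    ENNReal.ofReal_mul (sum_nonneg fun a _ => hp a)]

lemma ae_tendsto_symbolCount_div [DecidableEq A] [IsFiniteMeasure P]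
    (hiid : HasProductCylinders P X p) (hX : ∀ i, Measurable (X i)) (hp : ∀ a, 0 ≤ p a)
    (hp1 : ∑ a, p a = 1) (a : A) :
    ∀ᵐ ω ∂P, Tendsto (fun n => (symbolCount (fun i => X i ω) n a : ℝ) / n) atTop (𝓝 (p a)) := by
  set ind : A → ℝ := ({a} : Set A).indicator 1
  have hInd : Measurable ind := measurable_one.indicator (measurableSet_singleton a)
  have hslln := strong_law_ae_real (fun i => ind ∘ X i)
    ((integrable_const 1).indicator (hX 0 (measurableSet_singleton a)))
    (fun i j hij => (hiid.indepFun hX hp hp1 hij).comp hInd hInd)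
    (fun i => (hiid.identDistrib hX hp hp1 i 0).comp hInd)
  have hmean : P[ind ∘ X 0] = p a := by
    change ∫ ω, (X 0 ⁻¹' {a}).indicator 1 ω ∂P = p a
    rw [integral_indicator_one (hX 0 (measurableSet_singleton a)), measureReal_def,
      ← coe_singleton, hiid.measure_preimage hX hp hp1, sum_singleton,
      ENNReal.toReal_ofReal (hp a)]
  filter_upwards [hslln] with ω hω
  rw [hmean] at hω
  convert hω using 2 with n
  simp only [ind, symbolCount, Function.comp_apply, Set.indicator_apply, Set.mem_singleton_iff,
    Pi.one_apply, sum_boole]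

end HasProductCylinders

end IID

/-- The Krichevsky–Trofimov estimator
`P_c(x₁ⁿ) = ∏_{t=1}^n (v(x_t|x₁^{t-1}) + 1/2)/(t - 1 + |A|/2)` has pointwise redundancy
`O(log n)` uniformly over sequences, i.e. `log P(x₁ⁿ) - log P_c(x₁ⁿ) ≤ C log n` for all
`n ≥ 2` and all strings; in particular for i.i.d. `X₁, X₂, …` with distribution `p`,
`-(1/n) log P_c(X₁ⁿ) → H(p)` almost surely. -/
theorem stmt19_kt_estimator_universal
    {A : Type*} [Fintype A] [Nonempty A] [DecidableEq A]
    [MeasurableSpace A] [MeasurableSingletonClass A]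
    {Ω : Type*} [MeasurableSpace Ω] (P : Measure Ω) [IsProbabilityMeasure P]
    (X : ℕ → Ω → A) (hXmeas : ∀ i, Measurable (X i))
    (p : A → ℝ) (hppos : ∀ a, 0 < p a) (hpsum : ∑ a, p a = 1)
    -- i.i.d. with marginal `p`
    (hiid : ∀ (n : ℕ) (x : Fin n → A),
      P {ω | ∀ i : Fin n, X i ω = x i} = ENNReal.ofReal (∏ i : Fin n, p (x i)))
    -- the KT coding distribution (index `t` runs from `0`, i.e. `t-1+|A|/2 ↦ t+|A|/2`)
    (Pc : (n : ℕ) → (ℕ → A) → ℝ)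
    (hPc : ∀ n x, Pc n x = ∏ t ∈ Finset.range n,
      ((((Finset.range t).filter fun i => x i = x t).card : ℝ) + 1 / 2)
        / ((t : ℝ) + (Fintype.card A : ℝ) / 2)) :
    (∃ C : ℝ, 0 < C ∧ ∀ n : ℕ, 2 ≤ n → ∀ x : ℕ → A,
      Real.log (∏ i ∈ Finset.range n, p (x i)) - Real.log (Pc n x)
        ≤ C * Real.log n) ∧
    (∀ᵐ ω ∂P, Tendsto (fun n : ℕ => -(Real.log (Pc n (fun i => X i ω))) / n)
      atTop (nhds (-∑ a, p a * Real.log (p a)))) := by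
  simp only [show ∀ n x, Pc n x = ktEstimator x n from hPc]
  refine ⟨⟨4 * Fintype.card A, by positivity, fun n hn x => ?_⟩, ?_⟩
  · have hn' : (2 : ℝ) ≤ n := by exact_mod_cast hn
    have hlog : log (n + 1 : ℝ) ≤ 2 * log n := by
      have := log_le_log (by positivity) (show (n + 1 : ℝ) ≤ n ^ 2 by nlinarith)
      rwa [log_pow, Nat.cast_ofNat] at this
    calc _ ≤ 2 * Fintype.card A * log (n + 1) := log_prod_sub_log_ktEstimator_le hppos hpsum x n
      _ ≤ 2 * Fintype.card A * (2 * log n) := by gcongr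
      _ = _ := by ring
  · filter_upwards [ae_all_iff.mpr fun a =>
      HasProductCylinders.ae_tendsto_symbolCount_div hiid hXmeas (fun a => (hppos a).le) hpsum a]
      with ω hω
    simpa [negMulLog, sum_neg_distrib] using tendsto_neg_log_ktEstimator_div hω
end
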